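/- arXiv:1511.08191 — 2 statements merged into one kernel-verified Lean document; each statement's English description precedes it below -/
import Mathlib

section
/- For the Bernoulli measure μ_p on the middle-thirds Cantor set associated to the probability vector (p, 1−p), the correlation dimension equals −log₃(p² + (1−p)²). -/
open MeasureTheory Filter Metric Set Topology
open scoped ENNReal

/-- The lower local dimension of a measure at a point. -/
noncomputable def lowerLocalDim {X : Type*} [MetricSpace X] [MeasurableSpace X]
    (μ : Measure X) (x : X) : ℝ :=
  liminf (fun r : ℝ => Real.log (μ (closedBall x r)).toReal / Real.log r) (𝓝[>] 0)

/-- The upper local dimension of a measure at a point. -/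
noncomputable def upperLocalDim {X : Type*} [MetricSpace X] [MeasurableSpace X]
    (μ : Measure X) (x : X) : ℝ :=
  limsup (fun r : ℝ => Real.log (μ (closedBall x r)).toReal / Real.log r) (𝓝[>] 0)

/-- The `s`-potential of `μ` at `x`. -/
noncomputable def potential {X : Type*} [MetricSpace X] [MeasurableSpace X]
    (μ : Measure X) (s : ℝ) (x : X) : ℝ≥0∞ :=
  ∫⁻ y, edist x y ^ (-s) ∂μ

/-- The `s`-energy of `μ`. -/
noncomputable def energy {X : Type*} [MetricSpace X] [MeasurableSpace X]
    (μ : Measure X) (s : ℝ) : ℝ≥0∞ :=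
  ∫⁻ x, ∫⁻ y, edist x y ^ (-s) ∂μ ∂μ

/-- The correlation dimension of `μ`: `sup { s : I_s(μ) < ∞ }`. -/
noncomputable def corrDim {X : Type*} [MetricSpace X] [MeasurableSpace X]
    (μ : Measure X) : ℝ :=
  sSup {s : ℝ | energy μ s < ⊤}

/-- The lower Hausdorff dimension of `μ`: the `μ`-essential infimum of the
lower local dimension. -/
noncomputable def lowerHausdorffDim {X : Type*} [MetricSpace X] [MeasurableSpace X]
    (μ : Measure X) : ℝ :=
  essInf (fun x => lowerLocalDim μ x) μ

/-! Write `T₀ x = x / 3`, `T₁ x = x / 3 + 2 / 3`, `q = p² + (1 - p)²` and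
`C(r) = (μ ⊗ μ) {|x - y| < r}`. The distance to `[0, 1]` is at least tripled by `T₀⁻¹` and
`T₁⁻¹`, so `μ` lives on `[0, 1]`; the pieces `T₀ [0, 1]` and `T₁ [0, 1]` are then `1/3` apart, so
for `r ≤ 1/3` only the diagonal terms of `μ ⊗ μ = ∑ wᵢ wⱼ (Tᵢ × Tⱼ)_* (μ ⊗ μ)` meet
`{|x - y| < r}`, and `C(3⁻ⁿ) = C(1) qⁿ`. Cutting `|x - y|^(-s)` along the scales `3⁻ⁿ` bounds
the `s`-energy above and below by multiples of `∑ 3^(sn) C(3⁻ⁿ) ≍ ∑ (3^s q)ⁿ`, which is finite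
exactly when `s < -log₃ q`. -/

noncomputable def correlationIntegral {X : Type*} [MetricSpace X] [MeasurableSpace X]
    (μ : Measure X) (r : ℝ) : ℝ≥0∞ :=
  μ.prod μ {z | dist z.1 z.2 < r}

section RpowBounds

variable {c s : ℝ}

lemma ofReal_pow_rpow_neg (hc : 0 < c) (k : ℕ) :
    ENNReal.ofReal (c ^ k) ^ (-s) = ENNReal.ofReal (c ^ (-s)) ^ k := by
  rw [ENNReal.ofReal_rpow_of_pos (pow_pos hc k), ← ENNReal.ofReal_pow (Real.rpow_nonneg hc.le _),
    ← Real.rpow_natCast, ← Real.rpow_natCast, ← Real.rpow_mul hc.le, ← Real.rpow_mul hc.le,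
    mul_comm]

lemma ofReal_rpow_neg_le_pow (hc : 0 < c) (hs : 0 ≤ s) {t : ℝ} {k : ℕ} (h : c ^ k ≤ t) :
    ENNReal.ofReal t ^ (-s) ≤ ENNReal.ofReal (c ^ (-s)) ^ k := by
  rw [← ofReal_pow_rpow_neg hc, ENNReal.rpow_neg, ENNReal.rpow_neg]
  exact ENNReal.inv_le_inv.2 (ENNReal.rpow_le_rpow (ENNReal.ofReal_le_ofReal h) hs)

lemma pow_le_ofReal_rpow_neg (hc : 0 < c) (hs : 0 ≤ s) {t : ℝ} {k : ℕ} (h : t ≤ c ^ k) :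
    ENNReal.ofReal (c ^ (-s)) ^ k ≤ ENNReal.ofReal t ^ (-s) := by
  rw [← ofReal_pow_rpow_neg hc, ENNReal.rpow_neg, ENNReal.rpow_neg]
  exact ENNReal.inv_le_inv.2 (ENNReal.rpow_le_rpow (ENNReal.ofReal_le_ofReal h) hs)

/-- If `c ^ (n + 2) < t ≤ c ^ (n + 1)`, the `n`-th term of the series dominates `t ^ (-s)`. -/
lemma ofReal_rpow_neg_le_add_tsum (hc0 : 0 < c) (hc1 : c < 1) (hs : 0 ≤ s) (t : ℝ) :
    ENNReal.ofReal t ^ (-s) ≤ ENNReal.ofReal (c ^ (-s))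
      + ∑' m : ℕ, if t < c ^ m then ENNReal.ofReal (c ^ (-s)) ^ (m + 2) else 0 := by
  set A := ENNReal.ofReal (c ^ (-s))
  rcases lt_or_ge c t with hct | htc
  · have := ofReal_rpow_neg_le_pow hc0 hs (k := 1) (by simpa using hct.le)
    exact le_add_right (by simpa using this)
  rcases le_or_gt t 0 with ht | ht
  · have hA : 1 ≤ A := ENNReal.one_le_ofReal.2
      (Real.one_le_rpow_of_pos_of_le_one_of_nonpos hc0 hc1.le (neg_nonpos.2 hs))
    have hterm : ∀ m : ℕ, 1 ≤ if t < c ^ m then A ^ (m + 2) else 0 := fun m => by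
      rw [if_pos (ht.trans_lt (pow_pos hc0 m))]
      exact one_le_pow₀ hA
    have htop := ENNReal.tsum_le_tsum hterm
    rw [ENNReal.tsum_const_eq_top_of_ne_zero one_ne_zero, top_le_iff] at htop
    simp [htop]
  obtain ⟨n, hlow, hup⟩ := exists_nat_pow_near_of_lt_one (div_pos ht hc0)
    ((div_le_one hc0).2 htc) hc0 hc1
  have hlow' : c ^ (n + 2) ≤ t := by
    rw [pow_succ]; exact ((lt_div_iff₀ hc0).1 hlow).le
  have hup' : t < c ^ n := by
    calc t ≤ c ^ n * c := (div_le_iff₀ hc0).1 hup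
      _ < c ^ n := mul_lt_of_lt_one_right (pow_pos hc0 n) hc1
  calc ENNReal.ofReal t ^ (-s) ≤ A ^ (n + 2) := ofReal_rpow_neg_le_pow hc0 hs hlow'
    _ = if t < c ^ n then A ^ (n + 2) else 0 := (if_pos hup').symm
    _ ≤ ∑' m : ℕ, if t < c ^ m then A ^ (m + 2) else 0 := ENNReal.le_tsum n
    _ ≤ _ := le_add_self

end RpowBounds

section Energy

variable {X : Type*} [MetricSpace X] [MeasurableSpace X] [SecondCountableTopology X]
  {μ : Measure X}

lemma correlationIntegral_pos [SFinite μ] (hμ : μ ≠ 0) {r : ℝ} (hr : 0 < r) :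
    0 < correlationIntegral μ r := by
  obtain ⟨x, hx⟩ := Measure.nonempty_support hμ
  have hball : 0 < μ (ball x (r / 2)) :=
    (Measure.mem_support_iff_forall x).1 hx _ (ball_mem_nhds x (half_pos hr))
  calc 0 < μ (ball x (r / 2)) * μ (ball x (r / 2)) := ENNReal.mul_pos hball.ne' hball.ne'
    _ = μ.prod μ (ball x (r / 2) ×ˢ ball x (r / 2)) := (Measure.prod_prod _ _).symm
    _ ≤ correlationIntegral μ r := measure_mono fun z ⟨h1, h2⟩ =>
      calc dist z.1 z.2 ≤ dist z.1 x + dist z.2 x := dist_triangle_right _ _ _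
        _ < r / 2 + r / 2 := add_lt_add h1 h2
        _ = r := add_halves r

variable [BorelSpace X]

lemma measurableSet_setOf_dist_lt (r : ℝ) : MeasurableSet {z : X × X | dist z.1 z.2 < r} :=
  measurableSet_lt measurable_dist measurable_const

lemma energy_eq_lintegral_prod [SFinite μ] (s : ℝ) :
    energy μ s = ∫⁻ z, edist z.1 z.2 ^ (-s) ∂μ.prod μ :=
  (lintegral_prod _ (measurable_edist.pow_const _).aemeasurable).symm

variable {c a s : ℝ} {K : ℝ≥0∞}

theorem energy_lt_top_of_correlationIntegral_le [IsFiniteMeasure μ] (hc0 : 0 < c) (hc1 : c < 1)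
    (hs : 0 ≤ s) (hK : K ≠ ⊤)
    (hC : ∀ m : ℕ, correlationIntegral μ (c ^ m) ≤ K * ENNReal.ofReal a ^ m)
    (has : a * c ^ (-s) < 1) : energy μ s < ⊤ := by
  set A := ENNReal.ofReal (c ^ (-s))
  have hAa : ENNReal.ofReal a * A < 1 := by
    rw [← ENNReal.ofReal_mul' (Real.rpow_nonneg hc0.le _)]
    exact ENNReal.ofReal_lt_one.2 has
  calc energy μ s = ∫⁻ z, edist z.1 z.2 ^ (-s) ∂μ.prod μ := energy_eq_lintegral_prod s
    _ ≤ ∫⁻ z, A + ∑' m : ℕ,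
          {z : X × X | dist z.1 z.2 < c ^ m}.indicator (fun _ => A ^ (m + 2)) z ∂μ.prod μ :=
        lintegral_mono fun z => by
          simpa only [edist_dist, Set.indicator_apply, Set.mem_ofPred_eq]
            using ofReal_rpow_neg_le_add_tsum hc0 hc1 hs (dist z.1 z.2)
    _ = A * μ.prod μ univ + ∑' m : ℕ, A ^ (m + 2) * correlationIntegral μ (c ^ m) := by
        rw [lintegral_add_left measurable_const, lintegral_const,
          lintegral_tsum fun m => (measurable_const.indicator
            (measurableSet_setOf_dist_lt _)).aemeasurable]
        simp only [lintegral_indicator_const (measurableSet_setOf_dist_lt _), correlationIntegral]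
    _ ≤ A * μ.prod μ univ + ∑' m : ℕ, A ^ 2 * K * (ENNReal.ofReal a * A) ^ m := by
        refine add_le_add_right (ENNReal.tsum_le_tsum fun m => ?_) _
        calc A ^ (m + 2) * correlationIntegral μ (c ^ m)
            ≤ A ^ (m + 2) * (K * ENNReal.ofReal a ^ m) := by gcongr; exact hC m
          _ = A ^ 2 * K * (ENNReal.ofReal a * A) ^ m := by ring
    _ = A * μ.prod μ univ + A ^ 2 * K * (1 - ENNReal.ofReal a * A)⁻¹ := by
        rw [ENNReal.tsum_mul_left, ENNReal.tsum_geometric]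
    _ < ⊤ := by
        have : (1 - ENNReal.ofReal a * A)⁻¹ ≠ ⊤ := ENNReal.inv_ne_top.2 (tsub_pos_of_lt hAa).ne'
        finiteness

theorem energy_eq_top_of_le_correlationIntegral [SFinite μ] (hc0 : 0 < c) (hs : 0 ≤ s)
    (hK : K ≠ 0) (hC : ∀ m : ℕ, K * ENNReal.ofReal a ^ m ≤ correlationIntegral μ (c ^ m))
    (has : 1 < a * c ^ (-s)) : energy μ s = ⊤ := by
  set A := ENNReal.ofReal (c ^ (-s))
  have hAa : 1 < ENNReal.ofReal a * A := by
    rw [← ENNReal.ofReal_mul' (Real.rpow_nonneg hc0.le _)]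
    exact ENNReal.one_lt_ofReal.2 has
  have hbound : ∀ m : ℕ, K * (ENNReal.ofReal a * A) ^ m ≤ energy μ s := fun m =>
    calc K * (ENNReal.ofReal a * A) ^ m = A ^ m * (K * ENNReal.ofReal a ^ m) := by ring
      _ ≤ A ^ m * correlationIntegral μ (c ^ m) := by gcongr; exact hC m
      _ = ∫⁻ z, {z : X × X | dist z.1 z.2 < c ^ m}.indicator (fun _ => A ^ m) z ∂μ.prod μ := by
        rw [lintegral_indicator_const (measurableSet_setOf_dist_lt _), correlationIntegral]
      _ ≤ ∫⁻ z, edist z.1 z.2 ^ (-s) ∂μ.prod μ := lintegral_mono fun z => by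
        rw [Set.indicator_apply]
        split_ifs with hz
        · rw [edist_dist]
          exact pow_le_ofReal_rpow_neg hc0 hs (le_of_lt hz)
        · exact zero_le
      _ = energy μ s := (energy_eq_lintegral_prod s).symm
  have hlim : Tendsto (fun m : ℕ => K * (ENNReal.ofReal a * A) ^ m) atTop (𝓝 ⊤) := by
    simpa [ENNReal.mul_top hK] using ENNReal.Tendsto.const_mul (a := K)
      (ENNReal.tendsto_pow_atTop_nhds_top_iff.2 hAa) (Or.inl ENNReal.top_ne_zero)
  exact top_le_iff.1 (le_of_tendsto' hlim hbound)

theorem corrDim_eq_logb_of_correlationIntegral_eq [IsFiniteMeasure μ] (hc0 : 0 < c) (hc1 : c < 1)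
    (ha0 : 0 < a) (ha1 : a < 1) (hK0 : K ≠ 0) (hK : K ≠ ⊤)
    (hC : ∀ m : ℕ, correlationIntegral μ (c ^ m) = K * ENNReal.ofReal a ^ m) :
    corrDim μ = Real.logb c a := by
  set d := Real.logb c a
  have hd : 0 < d := Real.logb_pos_of_base_lt_one hc0 hc1 ha0 ha1
  have hcd : ∀ s, a * c ^ (-s) = c ^ (d - s) := fun s => by
    rw [Real.rpow_sub hc0, Real.rpow_logb hc0 hc1.ne ha0, Real.rpow_neg hc0.le, div_eq_mul_inv]
  have hle : ∀ s ∈ {s : ℝ | energy μ s < ⊤}, s ≤ d := fun s hs => by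
    by_contra! hds
    refine (energy_eq_top_of_le_correlationIntegral hc0 (hd.trans hds).le hK0 (fun m => (hC m).ge)
      ?_).not_lt hs
    rw [hcd]
    exact Real.one_lt_rpow_of_pos_of_lt_one_of_neg hc0 hc1 (sub_neg.2 hds)
  have hsub : Ioo 0 d ⊆ {s : ℝ | energy μ s < ⊤} := fun s ⟨hs0, hsd⟩ =>
    energy_lt_top_of_correlationIntegral_le hc0 hc1 hs0.le hK (fun m => (hC m).le)
      (by rw [hcd]; exact Real.rpow_lt_one hc0.le hc1 (sub_pos.2 hsd))
  refine le_antisymm (csSup_le ((nonempty_Ioo.2 hd).mono hsub) hle) ?_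
  calc d = sSup (Ioo 0 d) := (csSup_Ioo hd).symm
    _ ≤ corrDim μ := csSup_le_csSup ⟨d, hle⟩ (nonempty_Ioo.2 hd) hsub

end Energy

theorem measure_setOf_pos_eq_zero_of_tail_le {α : Type*} [MeasurableSpace α] {ν : Measure α}
    [IsFiniteMeasure ν] {f : α → ℝ} (hf : Measurable f) {b : ℝ} (hb : 1 < b)
    (h : ∀ ε > 0, ν {x | ε < f x} ≤ ν {x | b * ε < f x}) : ν {x | 0 < f x} = 0 := by
  have htail : Tendsto (fun t : ℝ => ν {x | t < f x}) atTop (𝓝 0) := by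
    have hempty : ⋂ t : ℝ, {x | t < f x} = ∅ :=
      eq_empty_iff_forall_notMem.2 fun x hx => lt_irrefl (f x) (mem_iInter.1 hx (f x))
    simpa [Function.comp_def, hempty] using
      tendsto_measure_iInter_atTop (μ := ν) (s := fun t : ℝ => {x | t < f x})
      (fun t => (measurableSet_lt measurable_const hf).nullMeasurableSet)
      (fun s t hst x hx => lt_of_le_of_lt hst hx) ⟨0, measure_ne_top _ _⟩
  have hpos : ∀ ε > 0, ν {x | ε < f x} = 0 := fun ε hε => by
    have hiter : ∀ n : ℕ, ν {x | ε < f x} ≤ ν {x | b ^ n * ε < f x} := fun n => by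
      induction n with
      | zero => simp
      | succ n ih =>
        exact ih.trans ((h _ (mul_pos (pow_pos (by linarith) n) hε)).trans_eq
          (by rw [pow_succ', mul_assoc]))
    exact le_antisymm (ge_of_tendsto (htail.comp
      ((tendsto_pow_atTop_atTop_of_one_lt hb).atTop_mul_const hε)) (.of_forall hiter)) zero_le
  have hunion : {x | 0 < f x} = ⋃ n : ℕ, {x | 1 / (n + 1 : ℝ) < f x} := by
    ext x
    simp only [mem_ofPred_eq, mem_iUnion]
    exact ⟨exists_nat_one_div_lt, fun ⟨n, hn⟩ => Nat.one_div_pos_of_nat.trans hn⟩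
  rw [hunion]
  exact measure_iUnion_null fun n => hpos _ Nat.one_div_pos_of_nat

lemma preimage_prodMap_div_add_setOf_dist_lt {k : ℝ} (hk : 0 < k) (b r : ℝ) :
    Prod.map (fun x : ℝ => x / k + b) (fun x => x / k + b) ⁻¹' {z | dist z.1 z.2 < r}
      = {z | dist z.1 z.2 < k * r} := by
  ext z
  simp only [mem_preimage, Prod.map, mem_ofPred_eq, Real.dist_eq]
  rw [show z.1 / k + b - (z.2 / k + b) = (z.1 - z.2) / k by ring, abs_div, abs_of_pos hk,
    div_lt_iff₀' hk]

def IsCantorBernoulli (p : ℝ) (μ : Measure ℝ) : Prop :=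
  μ = ENNReal.ofReal p • μ.map (fun x => x / 3)
    + ENNReal.ofReal (1 - p) • μ.map (fun x => x / 3 + 2 / 3)

namespace IsCantorBernoulli

variable {p : ℝ} {μ : Measure ℝ}

lemma measure_eq (h : IsCantorBernoulli p μ) {s : Set ℝ} (hs : MeasurableSet s) :
    μ s = ENNReal.ofReal p * μ ((fun x => x / 3) ⁻¹' s)
      + ENNReal.ofReal (1 - p) * μ ((fun x => x / 3 + 2 / 3) ⁻¹' s) := by
  nth_rewrite 1 [h]
  rw [Measure.add_apply, Measure.smul_apply, Measure.smul_apply,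
    Measure.map_apply (by fun_prop) hs, Measure.map_apply (by fun_prop) hs, smul_eq_mul,
    smul_eq_mul]

variable [IsFiniteMeasure μ]

/-- Outside `[0, 1]`, `max (-x) (x - 1)` is the distance to `[0, 1]`; it is at least tripled by
the inverse of either similarity. -/
lemma ae_mem_Icc (h : IsCantorBernoulli p μ) (hp : p ∈ Icc (0 : ℝ) 1) :
    ∀ᵐ x ∂μ, x ∈ Icc (0 : ℝ) 1 := by
  have hw : ENNReal.ofReal p + ENNReal.ofReal (1 - p) = 1 := by
    rw [← ENNReal.ofReal_add hp.1 (sub_nonneg.2 hp.2), add_sub_cancel, ENNReal.ofReal_one]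
  set f : ℝ → ℝ := fun x => max (-x) (x - 1)
  have hf : Measurable f := by fun_prop
  have htail : ∀ ε > 0, μ {x | ε < f x} ≤ μ {x | 3 * ε < f x} := fun ε _ => by
    have h₀ : (fun x => x / 3) ⁻¹' {x | ε < f x} ⊆ {x | 3 * ε < f x} := fun x hx => by
      simp only [f, mem_preimage, mem_ofPred_eq, lt_max_iff] at hx ⊢
      rcases hx with hx | hx
      exacts [Or.inl (by linarith), Or.inr (by linarith)]
    have h₁ : (fun x => x / 3 + 2 / 3) ⁻¹' {x | ε < f x} ⊆ {x | 3 * ε < f x} := fun x hx => by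
      simp only [f, mem_preimage, mem_ofPred_eq, lt_max_iff] at hx ⊢
      rcases hx with hx | hx
      exacts [Or.inl (by linarith), Or.inr (by linarith)]
    calc μ {x | ε < f x} = _ := h.measure_eq (measurableSet_lt measurable_const hf)
      _ ≤ ENNReal.ofReal p * μ {x | 3 * ε < f x}
          + ENNReal.ofReal (1 - p) * μ {x | 3 * ε < f x} := by
        gcongr
      _ = μ {x | 3 * ε < f x} := by rw [← add_mul, hw, one_mul]
  rw [ae_iff]
  convert measure_setOf_pos_eq_zero_of_tail_le hf (by norm_num) htail using 2
  ext x
  simp only [mem_ofPred_eq, mem_Icc, not_and_or, not_le, f, lt_max_iff, neg_pos, sub_pos]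

lemma correlationIntegral_eq_mul (h : IsCantorBernoulli p μ) (hp : p ∈ Icc (0 : ℝ) 1) {r : ℝ}
    (hr : 3 * r ≤ 1) :
    correlationIntegral μ r
      = ENNReal.ofReal (p ^ 2 + (1 - p) ^ 2) * correlationIntegral μ (3 * r) := by
  set D := {z : ℝ × ℝ | dist z.1 z.2 < r}
  have hT₀ : Measurable fun x : ℝ => x / 3 := by fun_prop
  have hT₁ : Measurable fun x : ℝ => x / 3 + 2 / 3 := by fun_prop
  have hmap : ∀ {f g : ℝ → ℝ}, Measurable f → Measurable g →
      (μ.map f).prod (μ.map g) D = μ.prod μ (Prod.map f g ⁻¹' D) := fun hf hg => by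
    rw [Measure.map_prod_map _ _ hf hg, Measure.map_apply (hf.prodMap hg)
      (measurableSet_setOf_dist_lt r)]
  have hI : ∀ᵐ z ∂μ.prod μ, z.1 ∈ Icc (0 : ℝ) 1 ∧ z.2 ∈ Icc (0 : ℝ) 1 :=
    (Measure.quasiMeasurePreserving_fst.ae (h.ae_mem_Icc hp)).and
      (Measure.quasiMeasurePreserving_snd.ae (h.ae_mem_Icc hp))
  have hcross : ∀ {f g : ℝ → ℝ},
      (∀ x ∈ Icc (0 : ℝ) 1, ∀ y ∈ Icc (0 : ℝ) 1, 1 / 3 ≤ dist (f x) (g y)) →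
      μ.prod μ (Prod.map f g ⁻¹' D) = 0 := fun hfg => by
    rw [measure_eq_zero_iff_ae_notMem]
    filter_upwards [hI] with z ⟨hz₁, hz₂⟩ hz
    exact (hfg _ hz₁ _ hz₂).not_gt (lt_of_lt_of_le hz (by linarith))
  have h₀₀ : μ.prod μ (Prod.map (fun x => x / 3) (fun x => x / 3) ⁻¹' D)
      = correlationIntegral μ (3 * r) := by
    have hpre := congrArg (μ.prod μ) (preimage_prodMap_div_add_setOf_dist_lt three_pos 0 r)
    simp only [add_zero] at hpre
    exact hpre
  have h₁₁ : μ.prod μ (Prod.map (fun x => x / 3 + 2 / 3) (fun x => x / 3 + 2 / 3) ⁻¹' D)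
      = correlationIntegral μ (3 * r) :=
    congrArg (μ.prod μ) (preimage_prodMap_div_add_setOf_dist_lt three_pos (2 / 3) r)
  have h₀₁ : μ.prod μ (Prod.map (fun x => x / 3) (fun x => x / 3 + 2 / 3) ⁻¹' D) = 0 :=
    hcross fun x hx y hy => by
      rw [Real.dist_eq]; exact le_abs.2 (Or.inr (by linarith [hx.2, hy.1]))
  have h₁₀ : μ.prod μ (Prod.map (fun x => x / 3 + 2 / 3) (fun x => x / 3) ⁻¹' D) = 0 :=
    hcross fun x hx y hy => by
      rw [Real.dist_eq]; exact le_abs.2 (Or.inl (by linarith [hx.1, hy.2]))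
  have hq : ENNReal.ofReal (p ^ 2 + (1 - p) ^ 2)
      = ENNReal.ofReal p ^ 2 + ENNReal.ofReal (1 - p) ^ 2 := by
    rw [ENNReal.ofReal_add (by positivity) (by positivity), ENNReal.ofReal_pow hp.1,
      ENNReal.ofReal_pow (sub_nonneg.2 hp.2)]
  change μ.prod μ D = _
  conv_lhs => rw [h]
  rw [Measure.add_prod, Measure.prod_add, Measure.prod_add]
  simp only [Measure.prod_smul_left, Measure.prod_smul_right, Measure.add_apply,
    Measure.smul_apply, smul_eq_mul, hmap hT₀ hT₀, hmap hT₀ hT₁, hmap hT₁ hT₀, hmap hT₁ hT₁,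
    h₀₀, h₀₁, h₁₀, h₁₁]
  rw [hq]
  ring

lemma correlationIntegral_inv_three_pow (h : IsCantorBernoulli p μ) (hp : p ∈ Icc (0 : ℝ) 1)
    (n : ℕ) :
    correlationIntegral μ (3⁻¹ ^ n)
      = correlationIntegral μ 1 * ENNReal.ofReal (p ^ 2 + (1 - p) ^ 2) ^ n := by
  induction n with
  | zero => simp
  | succ n ih =>
    have h3 : 3 * (3⁻¹ : ℝ) ^ (n + 1) = 3⁻¹ ^ n := by
      rw [pow_succ', mul_inv_cancel_left₀ three_ne_zero]
    rw [h.correlationIntegral_eq_mul hp (h3.trans_le (pow_le_one₀ (by norm_num) (by norm_num))),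
      h3, ih, pow_succ]
    ring

end IsCantorBernoulli

/-- The correlation dimension of the Bernoulli measure with weights `(p, 1-p)`
on the middle-thirds Cantor set equals `-log₃(p² + (1-p)²)`. -/
theorem corrDim_bernoulli_cantor (p : ℝ) (hp : p ∈ Set.Ioo (0 : ℝ) 1)
    (μ : Measure ℝ) [IsProbabilityMeasure μ]
    (hμ : μ = ENNReal.ofReal p • μ.map (fun x => x / 3)
        + ENNReal.ofReal (1 - p) • μ.map (fun x => x / 3 + 2 / 3)) :
    corrDim μ = - Real.logb 3 (p ^ 2 + (1 - p) ^ 2) := by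
  have hq₀ : 0 < p ^ 2 + (1 - p) ^ 2 := by nlinarith [hp.1]
  have hq₁ : p ^ 2 + (1 - p) ^ 2 < 1 := by nlinarith [hp.1, hp.2]
  rw [← Real.logb_inv_base]
  exact corrDim_eq_logb_of_correlationIntegral_eq (by norm_num) (by norm_num) hq₀ hq₁
    (correlationIntegral_pos (IsProbabilityMeasure.ne_zero μ) one_pos).ne' (measure_ne_top _ _)
    (IsCantorBernoulli.correlationIntegral_inv_three_pow hμ (Ioo_subset_Icc_self hp))
end

section
/- Let μ be a locally finite Borel regular measure on a complete separable metric space X and A ⊂ X with μ(A) > 0. Then for μ-almost every x ∈ A, the lower local dimension of μ at x equals the lower local dimension of μ|_A at x, and the upper local dimension of μ at x equals the upper local dimension of μ|_A at x. -/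
open MeasureTheory Filter Metric Set Topology
open scoped ENNReal

/-
Since `μ|_A ≤ μ`, the ratio `log μ|_A(B(x, r)) / log r` dominates `log μ(B(x, r)) / log r` for
small `r`. Conversely, a Vitali covering argument shows that for every `ε > 0` and `μ`-a.e.
`x ∈ A`, eventually `μ(B(x, 5r) ∩ A) ≥ (5r)^ε μ(B(x, r))`: at every scale `δ`, the points where
this fails arbitrarily close to `0` are covered by enlarged disjoint balls of total `μ|_A`-mass at
most `(5δ)^ε` times the `μ`-mass of a fixed open set of finite measure. After taking logarithms
this bounds the ratio for `μ|_A` at `5r` by `ε` plus the ratio for `μ` at `r`, up to the factor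
`log r / log (5r) → 1`, which changes neither the `liminf` nor the `limsup`.
-/

namespace Real

-- No boundedness is needed: if `T` is empty or unbounded above, so is `S`, and both sides are `0`.
theorem sSup_eq_sSup_of_subset_of_forall_sub_mem {S T : Set ℝ} (hST : S ⊆ T)
    (hTS : ∀ a ∈ T, ∀ ε > 0, a - ε ∈ S) : sSup S = sSup T := by
  rcases T.eq_empty_or_nonempty with rfl | ⟨a₀, ha₀⟩
  · rw [subset_empty_iff.1 hST]
  by_cases hT : BddAbove T
  · refine le_antisymm (csSup_le_csSup hT ⟨_, hTS a₀ ha₀ 1 one_pos⟩ hST)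
      (csSup_le ⟨a₀, ha₀⟩ fun a ha => ?_)
    exact le_of_forall_sub_le fun ε hε => le_csSup (hT.mono hST) (hTS a ha ε hε)
  · have hS : ¬BddAbove S := fun ⟨b, hb⟩ =>
      hT ⟨b + 1, fun a ha => by linarith [hb (hTS a ha 1 one_pos)]⟩
    rw [sSup_of_not_bddAbove hT, sSup_of_not_bddAbove hS]

theorem sInf_eq_sInf_of_subset_of_forall_add_mem {S T : Set ℝ} (hST : S ⊆ T)
    (hTS : ∀ a ∈ T, ∀ ε > 0, a + ε ∈ S) : sInf S = sInf T := by
  rw [sInf_def, sInf_def,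
    sSup_eq_sSup_of_subset_of_forall_sub_mem (neg_subset_neg.2 hST) fun a ha ε hε => ?_]
  simpa [neg_add_eq_sub] using hTS (-a) ha ε hε

variable {α : Type*} {l : Filter α} {f g : α → ℝ}

theorem liminf_eq_liminf_of_eventually_le (hfg : f ≤ᶠ[l] g)
    (hgf : ∀ a, (∀ᶠ x in l, a ≤ g x) → ∀ ε > 0, ∀ᶠ x in l, a - ε ≤ f x) :
    liminf f l = liminf g l := by
  rw [liminf_eq, liminf_eq]
  exact sSup_eq_sSup_of_subset_of_forall_sub_mem
    (fun a ha => (ha.and hfg).mono fun x h => h.1.trans h.2) hgf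

theorem limsup_eq_limsup_of_eventually_le (hfg : f ≤ᶠ[l] g)
    (hgf : ∀ a, (∀ᶠ x in l, f x ≤ a) → ∀ ε > 0, ∀ᶠ x in l, g x ≤ a + ε) :
    limsup f l = limsup g l := by
  rw [limsup_eq, limsup_eq]
  exact (sInf_eq_sInf_of_subset_of_forall_add_mem
    (fun a ha => (ha.and hfg).mono fun x h => h.2.trans h.1) hgf).symm

variable {φ : α → α} {c : α → ℝ}

theorem liminf_eq_liminf_of_le_of_comp_le_mul (hφ : Tendsto φ l l) (hc : Tendsto c l (𝓝 1))
    (hfg : f ≤ᶠ[l] g) (hgf : ∀ ε > 0, ∀ᶠ x in l, g (φ x) ≤ ε + c x * f x) :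
    liminf f l = liminf g l := by
  refine liminf_eq_liminf_of_eventually_le hfg fun a ha ε hε => ?_
  have hlim : Tendsto (fun x => (a - ε / 2) / c x) l (𝓝 ((a - ε / 2) / 1)) :=
    tendsto_const_nhds.div hc one_ne_zero
  rw [div_one] at hlim
  filter_upwards [hφ.eventually ha, hgf (ε / 2) (half_pos hε),
    hc.eventually (eventually_gt_nhds one_pos),
    hlim.eventually (eventually_gt_nhds (by linarith : a - ε < a - ε / 2))]
    with x hax hgx hcx hlt
  exact hlt.le.trans ((div_le_iff₀' hcx).2 (by linarith))

theorem limsup_eq_limsup_of_le_of_comp_le_mul (hφ : l ≤ map φ l) (hc : Tendsto c l (𝓝 1))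
    (hfg : f ≤ᶠ[l] g) (hgf : ∀ ε > 0, ∀ᶠ x in l, g (φ x) ≤ ε + c x * f x) :
    limsup f l = limsup g l := by
  refine limsup_eq_limsup_of_eventually_le hfg fun a ha ε hε => hφ (eventually_map.2 ?_)
  have hlim : Tendsto (fun x => ε / 2 + c x * a) l (𝓝 (ε / 2 + 1 * a)) :=
    tendsto_const_nhds.add (hc.mul_const a)
  rw [one_mul] at hlim
  filter_upwards [ha, hgf (ε / 2) (half_pos hε), hc.eventually (eventually_gt_nhds one_pos),
    hlim.eventually (eventually_lt_nhds (by linarith : ε / 2 + a < a + ε))]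
    with x hfx hgx hcx hlt
  calc g (φ x) ≤ ε / 2 + c x * f x := hgx
    _ ≤ ε / 2 + c x * a := by gcongr
    _ ≤ a + ε := hlt.le

end Real

theorem map_mul_left_nhdsGT_zero {K : ℝ} (hK : 0 < K) : map (K * ·) (𝓝[>] 0) = 𝓝[>] 0 := by
  simpa [image_mul_left_Ioi hK] using
    (Homeomorph.mulLeft₀ K hK.ne').isEmbedding.map_nhdsWithin_eq (Ioi 0) 0

theorem tendsto_log_div_log_mul {K : ℝ} (hK : 0 < K) :
    Tendsto (fun r => Real.log r / Real.log (K * r)) (𝓝[>] 0) (𝓝 1) := by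
  have h : Tendsto (fun r => (Real.log K / Real.log r + 1)⁻¹) (𝓝[>] 0) (𝓝 1) := by
    simpa using ((tendsto_const_nhds.div_atBot Real.tendsto_log_nhdsGT_zero).add_const 1).inv₀
      (by norm_num : (0 : ℝ) + 1 ≠ 0)
  refine h.congr' ?_
  filter_upwards [Ioo_mem_nhdsGT one_pos] with r hr
  have hlog : Real.log r ≠ 0 := (Real.log_neg hr.1 hr.2).ne
  rw [Real.log_mul hK.ne' hr.1.ne']
  field_simp

noncomputable def logRatio (F : ℝ → ℝ≥0∞) (r : ℝ) : ℝ :=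
  Real.log (F r).toReal / Real.log r

theorem logRatio_le_logRatio {F G : ℝ → ℝ≥0∞} {r : ℝ} (hr₀ : 0 < r) (hr₁ : r < 1)
    (hG : 0 < G r) (hGF : G r ≤ F r) (hF : F r ≠ ∞) : logRatio F r ≤ logRatio G r :=
  (div_le_div_right_of_neg (Real.log_neg hr₀ hr₁)).2 <|
    Real.log_le_log (ENNReal.toReal_pos hG.ne' (ne_top_of_le_ne_top hF hGF))
      (ENNReal.toReal_mono hF hGF)

theorem logRatio_mul_le {F G : ℝ → ℝ≥0∞} {K ε r : ℝ} (hK : 0 < K) (hr₀ : 0 < r) (hr₁ : r < 1)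
    (hKr : K * r < 1) (hF₀ : 0 < F r) (hF : F r ≠ ∞) (hG : G (K * r) ≠ ∞)
    (h : ENNReal.ofReal ((K * r) ^ ε) * F r ≤ G (K * r)) :
    logRatio G (K * r) ≤ ε + Real.log r / Real.log (K * r) * logRatio F r := by
  have hKr₀ : 0 < K * r := mul_pos hK hr₀
  have hlog : ε * Real.log (K * r) + Real.log (F r).toReal ≤ Real.log (G (K * r)).toReal := by
    have h' := ENNReal.toReal_mono hG h
    rw [ENNReal.toReal_mul, ENNReal.toReal_ofReal (by positivity)] at h'
    have hFr : 0 < (F r).toReal := ENNReal.toReal_pos hF₀.ne' hF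
    rw [← Real.log_rpow hKr₀, ← Real.log_mul (by positivity) hFr.ne']
    exact Real.log_le_log (by positivity) h'
  have hlogr : Real.log r ≠ 0 := (Real.log_neg hr₀ hr₁).ne
  have hlogKr : Real.log (K * r) < 0 := Real.log_neg hKr₀ hKr
  calc logRatio G (K * r)
      ≤ (ε * Real.log (K * r) + Real.log (F r).toReal) / Real.log (K * r) :=
        (div_le_div_right_of_neg hlogKr).2 hlog
    _ = ε + Real.log r / Real.log (K * r) * logRatio F r := by
        unfold logRatio
        field_simp [hlogr, hlogKr.ne]

theorem liminf_logRatio_eq_and_limsup_logRatio_eq {F G : ℝ → ℝ≥0∞} {K : ℝ} (hK : 0 < K)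
    (hGF : ∀ r, G r ≤ F r) (hG : ∀ r > 0, 0 < G r) (hF : ∀ᶠ r in 𝓝[>] 0, F r < ∞)
    (hFG : ∀ ε > (0 : ℝ), ∀ᶠ r in 𝓝[>] 0, ENNReal.ofReal ((K * r) ^ ε) * F r ≤ G (K * r)) :
    liminf (logRatio F) (𝓝[>] 0) = liminf (logRatio G) (𝓝[>] 0) ∧
      limsup (logRatio F) (𝓝[>] 0) = limsup (logRatio G) (𝓝[>] 0) := by
  have hsmall : ∀ᶠ r in 𝓝[>] (0 : ℝ), 0 < r ∧ r < 1 ∧ K * r < 1 := by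
    have hKr : Tendsto (K * ·) (𝓝 (0 : ℝ)) (𝓝 0) :=
      (continuous_const_mul K).tendsto' 0 0 (mul_zero K)
    exact eventually_mem_nhdsWithin.and <| nhdsWithin_le_nhds <|
      (eventually_lt_nhds one_pos).and (hKr.eventually (eventually_lt_nhds one_pos))
  have hfg : logRatio F ≤ᶠ[𝓝[>] 0] logRatio G := by
    filter_upwards [hsmall, hF] with r ⟨hr₀, hr₁, _⟩ hFr
    exact logRatio_le_logRatio hr₀ hr₁ (hG r hr₀) (hGF r) hFr.ne
  have hgf : ∀ ε > (0 : ℝ), ∀ᶠ r in 𝓝[>] 0,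
      logRatio G (K * r) ≤ ε + Real.log r / Real.log (K * r) * logRatio F r := by
    intro ε hε
    filter_upwards [hsmall, hF, eventually_nhdsGT_zero_mul_left hK hF, hFG ε hε]
      with r ⟨hr₀, hr₁, hKr⟩ hFr hFKr h
    exact logRatio_mul_le hK hr₀ hr₁ hKr ((hG r hr₀).trans_le (hGF r)) hFr.ne
      ((hGF _).trans_lt hFKr).ne h
  have hmap := map_mul_left_nhdsGT_zero hK
  have hc := tendsto_log_div_log_mul hK
  exact ⟨Real.liminf_eq_liminf_of_le_of_comp_le_mul hmap.le hc hfg hgf,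
    Real.limsup_eq_limsup_of_le_of_comp_le_mul hmap.ge hc hfg hgf⟩

section

variable {X : Type*} [PseudoMetricSpace X] [MeasurableSpace X]

theorem measure_le_mul_of_forall_exists_closedBall [SecondCountableTopology X]
    [OpensMeasurableSpace X] (μ ν : Measure X) {s U : Set X} {τ δ : ℝ} {c : ℝ≥0∞} (hτ : 3 < τ)
    (h : ∀ x ∈ s, ∃ r ∈ Ioc 0 δ,
      closedBall x r ⊆ U ∧ ν (closedBall x (τ * r)) ≤ c * μ (closedBall x r)) :
    ν s ≤ c * μ U := by
  choose! R hR hRU hRν using h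
  obtain ⟨u, hus, hu_disj, hu_cov⟩ :=
    Vitali.exists_disjoint_subfamily_covering_enlargement_closedBall s id R δ
      (fun x hx => (hR x hx).2) τ hτ
  simp only [id] at hu_disj hu_cov
  have hu : u.Countable := (hu_disj.mono fun _ => ball_subset_closedBall).countable_of_isOpen
    (fun _ _ => isOpen_ball) fun x hx => nonempty_ball.2 (hR x (hus hx)).1
  have hcov : s ⊆ ⋃ x ∈ u, closedBall x (τ * R x) := fun x hx => by
    obtain ⟨y, hy, hxy⟩ := hu_cov x hx
    exact mem_biUnion hy (hxy (mem_closedBall_self (hR x hx).1.le))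
  calc ν s ≤ ∑' x : u, ν (closedBall x (τ * R x)) :=
        (measure_mono hcov).trans (measure_biUnion_le ν hu _)
    _ ≤ ∑' x : u, c * μ (closedBall x (R x)) := ENNReal.tsum_le_tsum fun x => hRν x (hus x.2)
    _ = c * μ (⋃ x ∈ u, closedBall x (R x)) := by
        rw [ENNReal.tsum_mul_left, measure_biUnion hu hu_disj fun _ _ => measurableSet_closedBall]
    _ ≤ c * μ U := by
        gcongr
        exact iUnion₂_subset fun x hx => hRU x (hus hx)

theorem measure_restrict_setOf_frequently_lt_eq_zero [SecondCountableTopology X]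
    [OpensMeasurableSpace X] (μ : Measure X) (A : Set X) {U : Set X} (hU : IsOpen U)
    (hμU : μ U ≠ ∞) {τ ε : ℝ} (hτ : 3 < τ) (hε : 0 < ε) :
    μ.restrict A {x ∈ U | ∃ᶠ r in 𝓝[>] 0,
      μ (closedBall x (τ * r) ∩ A) < ENNReal.ofReal ((τ * r) ^ ε) * μ (closedBall x r)} = 0 := by
  have hτ₀ : 0 < τ := by linarith
  set B := {x ∈ U | ∃ᶠ r in 𝓝[>] 0,
    μ (closedBall x (τ * r) ∩ A) < ENNReal.ofReal ((τ * r) ^ ε) * μ (closedBall x r)}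
  have hB : ∀ δ > 0, μ.restrict A B ≤ ENNReal.ofReal ((τ * δ) ^ ε) * μ U := by
    intro δ hδ
    refine measure_le_mul_of_forall_exists_closedBall (δ := δ) μ _ hτ fun x hx => ?_
    have hsmall : ∀ᶠ r in 𝓝[>] 0, r ∈ Ioc 0 δ ∧ closedBall x r ⊆ U :=
      (eventually_mem_set.2 (Ioc_mem_nhdsGT hδ)).and
        (nhdsWithin_le_nhds (eventually_closedBall_subset (hU.mem_nhds hx.1)))
    obtain ⟨r, hr, hrδ, hrU⟩ := (hx.2.and_eventually hsmall).exists
    refine ⟨r, hrδ, hrU, ?_⟩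
    rw [Measure.restrict_apply measurableSet_closedBall]
    refine hr.le.trans ?_
    have hr₀ := hrδ.1
    gcongr
    exact hrδ.2
  have hlim : Tendsto (fun δ => ENNReal.ofReal ((τ * δ) ^ ε) * μ U) (𝓝 0) (𝓝 0) := by
    have hcont : Continuous fun δ : ℝ => (τ * δ) ^ ε :=
      (continuous_const_mul τ).rpow_const fun _ => Or.inr hε.le
    simpa [Real.zero_rpow hε.ne'] using
      ENNReal.Tendsto.mul_const (ENNReal.tendsto_ofReal (hcont.tendsto 0)) (Or.inr hμU)
  exact nonpos_iff_eq_zero.1 <|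
    ge_of_tendsto (x := 𝓝[>] 0) (hlim.mono_left nhdsWithin_le_nhds)
      (eventually_mem_nhdsWithin.mono hB)

theorem ae_restrict_forall_eventually_le_measure_closedBall_inter [SecondCountableTopology X]
    [OpensMeasurableSpace X] (μ : Measure X) [IsLocallyFiniteMeasure μ] (A : Set X) {τ : ℝ}
    (hτ : 3 < τ) :
    ∀ᵐ x ∂μ.restrict A, ∀ ε > (0 : ℝ), ∀ᶠ r in 𝓝[>] 0,
      ENNReal.ofReal ((τ * r) ^ ε) * μ (closedBall x r) ≤ μ (closedBall x (τ * r) ∩ A) := by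
  let U := μ.finiteSpanningSetsInOpen'
  have hn : ∀ n : ℕ, ∀ᵐ x ∂μ.restrict A, ∀ᶠ r in 𝓝[>] 0,
      ENNReal.ofReal ((τ * r) ^ (1 / (n + 1 : ℝ))) * μ (closedBall x r) ≤
        μ (closedBall x (τ * r) ∩ A) := by
    intro n
    refine measure_mono_null (fun x hx => ?_) (measure_iUnion_null fun i =>
      measure_restrict_setOf_frequently_lt_eq_zero μ A (U.set_mem i) (U.finite i).ne hτ
        (by positivity : (0 : ℝ) < 1 / (n + 1)))
    obtain ⟨i, hi⟩ := mem_iUnion.1 (U.spanning.symm ▸ mem_univ x)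
    exact mem_iUnion.2 ⟨i, hi, by simpa [Filter.not_eventually] using hx⟩
  filter_upwards [ae_all_iff.2 hn] with x hx ε hε
  obtain ⟨n, hn⟩ := exists_nat_one_div_lt hε
  have hτ₀ : 0 < τ := by linarith
  filter_upwards [hx n, Ioc_mem_nhdsGT (inv_pos.2 hτ₀)] with r hr hrτ
  refine le_trans ?_ hr
  gcongr ?_ * _
  exact ENNReal.ofReal_le_ofReal <| Real.rpow_le_rpow_of_exponent_ge (mul_pos hτ₀ hrτ.1)
    ((mul_le_mul_of_nonneg_left hrτ.2 hτ₀.le).trans_eq (mul_inv_cancel₀ hτ₀.ne')) hn.le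

theorem ae_forall_measure_closedBall_pos [HereditarilyLindelofSpace X] (ν : Measure X) :
    ∀ᵐ x ∂ν, ∀ r > 0, 0 < ν (closedBall x r) := by
  filter_upwards [ν.support_mem_ae] with x hx r hr
  exact (Measure.mem_support_iff_forall x).1 hx _ (closedBall_mem_nhds x hr)

theorem eventually_measure_closedBall_lt_top (μ : Measure X) [IsLocallyFiniteMeasure μ] (x : X) :
    ∀ᶠ r in 𝓝 0, μ (closedBall x r) < ∞ :=
  (tendsto_closedBall_smallSets x).eventually (μ.finiteAt_nhds x).eventually

end

theorem localDim_restrict_general {X : Type*}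
    [MetricSpace X] [SecondCountableTopology X]
    [MeasurableSpace X] [BorelSpace X]
    (μ : Measure X) [IsLocallyFiniteMeasure μ]
    (A : Set X) :
    ∀ᵐ x ∂μ.restrict A,
      lowerLocalDim μ x = lowerLocalDim (μ.restrict A) x ∧
      upperLocalDim μ x = upperLocalDim (μ.restrict A) x := by
  filter_upwards [ae_restrict_forall_eventually_le_measure_closedBall_inter μ A
    (by norm_num : (3 : ℝ) < 5), ae_forall_measure_closedBall_pos (μ.restrict A)] with x hFG hG
  simp only [lowerLocalDim, upperLocalDim, Measure.restrict_apply measurableSet_closedBall] at hG ⊢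
  exact liminf_logRatio_eq_and_limsup_logRatio_eq (by norm_num)
    (fun r => measure_mono inter_subset_left) hG
    (nhdsWithin_le_nhds (eventually_measure_closedBall_lt_top μ x)) hFG

theorem localDim_restrict {X : Type*}
    [MetricSpace X] [CompleteSpace X] [SecondCountableTopology X]
    [MeasurableSpace X] [BorelSpace X]
    (μ : Measure X) [IsLocallyFiniteMeasure μ] [μ.Regular]
    (A : Set X) (hA : 0 < μ A) :
    ∀ᵐ x ∂μ.restrict A,
      lowerLocalDim μ x = lowerLocalDim (μ.restrict A) x ∧
      upperLocalDim μ x = upperLocalDim (μ.restrict A) x :=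
  localDim_restrict_general μ A
end
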